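/- arXiv:math/0501233 — 2 statements merged into one kernel-verified Lean document; each statement's English description precedes it below -/
import Mathlib

section
/- Let F be a pure ordered FFKP of m factors for prime a, with N^{(m)}_k rows of type (a,k) for each k ≤ k_m, and let F' = F_{a^{k_{m+1}}} ⊗ F with k_{m+1} ≥ k_m. Then: the number of type-(a,0) rows of F' equals N^{(m)}_0; for 1 ≤ k ≤ k_m the number of type-(a,k) rows of F' equals a^{k-1}(a-1)·(N^{(m)}_0 + ⋯ + N^{(m)}_{k-1}) + a^k·N^{(m)}_k; and for k_m < l ≤ k_{m+1} the number of type-(a,l) rows of F' equals a^{l-1}(a-1)·a^{k_1+⋯+k_m}. -/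
open Matrix

/-- The unitary Fourier matrix of size `n` (0-based indexing):
`[F_n]_{i,j} = (1/√n)·exp(2πi·i·j/n)`. -/
noncomputable def Fourier (n : ℕ) : Matrix (Fin n) (Fin n) ℂ :=
  Matrix.of fun i j =>
    ((1 / Real.sqrt n : ℝ) : ℂ) *
      Complex.exp (2 * Real.pi * Complex.I * ((i : ℕ) : ℂ) * ((j : ℕ) : ℂ) / n)

/-- Kronecker product of square complex matrices, realized on `Fin (m * n)`. -/
noncomputable def kron {m n : ℕ} (A : Matrix (Fin m) (Fin m) ℂ)
    (B : Matrix (Fin n) (Fin n) ℂ) : Matrix (Fin (m * n)) (Fin (m * n)) ℂ :=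
  Matrix.of fun i j =>
    A (finProdFinEquiv.symm i).1 (finProdFinEquiv.symm j).1 *
      B (finProdFinEquiv.symm i).2 (finProdFinEquiv.symm j).2

/-- Kronecker product of row vectors. -/
noncomputable def kronVec {m n : ℕ} (v : Fin m → ℂ) (w : Fin n → ℂ) : Fin (m * n) → ℂ :=
  fun i => v (finProdFinEquiv.symm i).1 * w (finProdFinEquiv.symm i).2

/-- Kronecker product of the Fourier matrices of the sizes in the list `L`. -/
noncomputable def kronFourier : (L : List ℕ) → Matrix (Fin L.prod) (Fin L.prod) ℂ
  | [] => 1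
  | n :: t => kron (Fourier n) (kronFourier t)

open Classical in
/-- `v` is a row of length `N` whose entries are `(1/√N)` times the `n`-th roots of
unity, each occurring `N / n` times. -/
def RowVals (N n : ℕ) (v : Fin N → ℂ) : Prop :=
  ∀ t : Fin n,
    (Finset.univ.filter fun j =>
      v j = ((1 / Real.sqrt N : ℝ) : ℂ) *
        Complex.exp (2 * Real.pi * Complex.I * ((t : ℕ) : ℂ) / n)).card = N / n

open Classical in
/-- Number of rows of the square matrix `M` that are of "type `n`", i.e. consist of
`(1/√N)` times the `n`-th roots of unity, each occurring equally often. -/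
noncomputable def countRows (N n : ℕ) (M : Matrix (Fin N) (Fin N) ℂ) : ℕ :=
  (Finset.univ.filter fun i : Fin N => RowVals N n (M i)).card

/-- `P` is a permutation matrix. -/
def IsPermMatrix {α : Type*} [DecidableEq α] (P : Matrix α α ℂ) : Prop :=
  ∃ σ : Equiv.Perm α, ∀ i j, P i j = if σ j = i then (1 : ℂ) else 0

/-- `D` is a unitary diagonal matrix. -/
def IsUnitaryDiag {α : Type*} [DecidableEq α] (D : Matrix α α ℂ) : Prop :=
  ∃ d : α → ℂ, (∀ i, ‖d i‖ = 1) ∧ D = Matrix.diagonal d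


/-!
Row `r` of `F_n` is `1/√n` times the character `j ↦ e(rj/n)` of `ZMod n`; it takes every
`d`-th root of unity equally often, where `d = n / gcd(n, r)` is the additive order of `r`.
So a row of `F_{a^K}` has type `a^e` for a unique `e ≤ K`, and exactly `φ(a^e)` rows do.
If one Kronecker factor is equidistributed on the `n`-th roots of unity and the other only takes
`n`-th roots of unity as values, the product is again equidistributed on them: for prime powers,
types combine by `max`. Counting pairs of types with `max(e, t) = k` gives
`φ(a^k) · #{t ≤ k} + (∑_{j<k} φ(a^j)) · #{t = k}`, and `∑_{j≤k} φ(a^j) = a^k` turns this into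
the three formulas.
-/

open Finset ZMod

noncomputable def finEquivZMod (n : ℕ) [NeZero n] : Fin n ≃ ZMod n where
  toFun j := (j : ℕ)
  invFun x := ⟨x.val, x.val_lt⟩
  left_inv j := Fin.ext (val_cast_of_lt j.isLt)
  right_inv := natCast_zmod_val

lemma card_filter_comp_equiv {α β : Type*} [Fintype α] [Fintype β] (e : α ≃ β) (p : β → Prop)
    [DecidablePred p] : #{a | p (e a)} = #{b | p b} := by
  simp only [← Fintype.card_subtype]
  exact Fintype.card_congr (e.subtypeEquiv fun _ => Iff.rfl)

lemma AddMonoidHom.card_fiber_of_surjective {G H : Type*} [AddGroup G] [Fintype G] [AddGroup H]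
    [Fintype H] [DecidableEq H] (f : G →+ H) (hf : Function.Surjective f) (y : H) :
    #{x | f x = y} = Fintype.card G / Fintype.card H := by
  have hcard : Fintype.card G = Fintype.card H * #{x | f x = y} := by
    rw [← card_univ, card_eq_sum_card_fiberwise (f := f) (t := univ) fun _ _ => mem_univ _,
      sum_congr rfl fun y' _ => card_fiber_eq_of_mem_range f (hf y') (hf y), sum_const,
      card_univ, smul_eq_mul]
  rw [hcard, Nat.mul_div_cancel_left _ Fintype.card_pos]

lemma toCircle_inj {n : ℕ} [NeZero n] {x y : ZMod n} :
    (toCircle x : ℂ) = toCircle y ↔ x = y :=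
  Circle.coe_inj.trans injective_toCircle.eq_iff

lemma toCircle_mul_natCast {n d g : ℕ} [NeZero n] [NeZero d] (h : d * g = n) (x : ZMod n) :
    (toCircle (x * (g : ZMod n)) : ℂ) = toCircle (castHom ⟨g, h.symm⟩ (ZMod d) x) := by
  obtain ⟨s, rfl⟩ := intCast_surjective x
  have hg : (g : ℂ) ≠ 0 := by
    rintro hg
    exact NeZero.ne n (by rw [← h, Nat.cast_eq_zero.mp hg, mul_zero])
  rw [map_intCast, ← Int.cast_natCast, ← Int.cast_mul, toCircle_intCast, toCircle_intCast, ← h]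
  congr 1
  push_cast
  field_simp

lemma exists_toCircle_eq_of_dvd {m n : ℕ} [NeZero m] [NeZero n] (h : m ∣ n) (x : ZMod m) :
    ∃ y : ZMod n, (toCircle x : ℂ) = toCircle y := by
  obtain ⟨g, hg⟩ := h
  obtain ⟨y, rfl⟩ := ringHom_surjective (castHom ⟨g, hg⟩ (ZMod m)) x
  exact ⟨y * g, (toCircle_mul_natCast hg.symm y).symm⟩

open Classical in
def Equidistributed {α : Type*} [Fintype α] (n : ℕ) [NeZero n] (c : ℂ) (v : α → ℂ) : Prop :=
  ∀ x : ZMod n, #{a | v a = c * toCircle x} = Fintype.card α / n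

section Equidistributed

variable {α β : Type*} [Fintype α] [Fintype β] {n : ℕ} [NeZero n] {c c' : ℂ}

lemma equidistributed_comp_equiv (e : β ≃ α) {v : α → ℂ} :
    Equidistributed n c (v ∘ e) ↔ Equidistributed n c v := by
  classical
  unfold Equidistributed
  rw [Fintype.card_congr e]
  refine forall_congr' fun x => ?_
  rw [← card_filter_comp_equiv e (fun a => v a = c * toCircle x)]
  rfl

lemma Equidistributed.exists_eq {v : α → ℂ} (hv : Equidistributed n c v) (hc : c ≠ 0)
    (hn : n ∣ Fintype.card α) (a : α) : ∃ x : ZMod n, v a = c * toCircle x := by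
  classical
  set fiber : ZMod n → Finset α := fun x => {a | v a = c * toCircle x}
  have hdisj : ∀ x ∈ univ, ∀ y ∈ univ, x ≠ y → Disjoint (fiber x) (fiber y) := by
    intro x _ y _ hxy
    refine disjoint_left.mpr fun a hax hay => hxy ?_
    simp only [fiber, mem_filter, mem_univ, true_and] at hax hay
    exact toCircle_inj.mp (mul_left_cancel₀ hc (hax.symm.trans hay))
  have hcover : univ.biUnion fiber = univ := by
    refine eq_univ_of_card _ ?_
    rw [card_biUnion hdisj,
      sum_congr rfl fun x _ => hv x, sum_const, card_univ, ZMod.card, smul_eq_mul,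
      Nat.mul_div_cancel' hn]
  obtain ⟨x, -, hx⟩ := mem_biUnion.mp (hcover ▸ mem_univ a)
  exact ⟨x, (mem_filter.mp hx).2⟩

lemma Equidistributed.mul_right {v : α → ℂ} {w : β → ℂ} (hv : Equidistributed n c v)
    (hw : ∀ b, ∃ y : ZMod n, w b = c' * toCircle y) (hc' : c' ≠ 0) (hn : n ∣ Fintype.card α) :
    Equidistributed n (c * c') (fun p : α × β => v p.1 * w p.2) := by
  classical
  choose φ hφ using hw
  intro x
  have hfiber : ∀ b, #{a | v a * w b = c * c' * toCircle x} = Fintype.card α / n := by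
    intro b
    rw [← hv (x - φ b)]
    congr 1
    refine filter_congr fun a _ => ?_
    have hx : (toCircle x : ℂ) = toCircle (x - φ b) * toCircle (φ b) := by
      rw [← Circle.coe_mul, ← AddChar.map_add_eq_mul, sub_add_cancel]
    rw [hφ b, hx, show c * c' * (toCircle (x - φ b) * toCircle (φ b) : ℂ)
      = c * toCircle (x - φ b) * (c' * toCircle (φ b)) by ring,
      mul_left_inj' (mul_ne_zero hc' (Circle.coe_ne_zero _))]
  rw [card_filter, Fintype.sum_prod_type_right]
  simp_rw [← card_filter]
  rw [sum_congr rfl fun b _ => hfiber b, sum_const, card_univ, smul_eq_mul, Fintype.card_prod,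
    mul_comm (Fintype.card α), Nat.mul_div_assoc _ hn]

lemma Equidistributed.mul_left {v : α → ℂ} {w : β → ℂ} (hw : Equidistributed n c' w)
    (hv : ∀ a, ∃ y : ZMod n, v a = c * toCircle y) (hc : c ≠ 0) (hn : n ∣ Fintype.card β) :
    Equidistributed n (c * c') (fun p : α × β => v p.1 * w p.2) := by
  rw [mul_comm c]
  convert (equidistributed_comp_equiv (Equiv.prodComm α β)).mpr (hw.mul_right hv hc hn) using 2
  exact mul_comm _ _

lemma equidistributed_toCircle_comp {G : Type*} [AddGroup G] [Fintype G] (f : G →+ ZMod n)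
    (hf : Function.Surjective f) (hc : c ≠ 0) :
    Equidistributed n c (fun a => c * toCircle (f a)) := by
  classical
  intro x
  refine (congrArg card (filter_congr fun a _ => ?_)).trans
    ((f.card_fiber_of_surjective hf x).trans (by rw [ZMod.card]))
  rw [mul_right_inj' hc, toCircle_inj]

end Equidistributed

lemma rowVals_iff_equidistributed {N n : ℕ} [NeZero n] (v : Fin N → ℂ) :
    RowVals N n v ↔ Equidistributed n ((1 / Real.sqrt N : ℝ) : ℂ) v := by
  unfold RowVals Equidistributed
  rw [Fintype.card_fin, ← (finEquivZMod n).forall_congr_right]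
  refine forall_congr' fun t => ?_
  simp only [finEquivZMod, Equiv.coe_fn_mk, toCircle_natCast]

lemma RowVals.eq_of_dvd {N m n : ℕ} {v : Fin N → ℂ} (hm : RowVals N m v) (hn : RowVals N n v)
    (hN : N ≠ 0) (hmN : m ∣ N) (hnN : n ∣ N) : m = n := by
  have h0m := hm ⟨0, Nat.pos_of_ne_zero (ne_zero_of_dvd_ne_zero hN hmN)⟩
  have h0n := hn ⟨0, Nat.pos_of_ne_zero (ne_zero_of_dvd_ne_zero hN hnN)⟩
  simp only [Nat.cast_zero, mul_zero, zero_div] at h0m h0n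
  -- the entry `1/√N` occurs `N / m = N / n` times
  rw [← Nat.div_div_self hmN hN, ← Nat.div_div_self hnN hN, ← h0m, ← h0n]

lemma ofReal_one_div_sqrt_natCast_mul (M N : ℕ) :
    ((1 / Real.sqrt (M * N : ℕ) : ℝ) : ℂ)
      = ((1 / Real.sqrt M : ℝ) : ℂ) * ((1 / Real.sqrt N : ℝ) : ℂ) := by
  rw [Nat.cast_mul, Real.sqrt_mul (Nat.cast_nonneg M), ← one_div_mul_one_div, Complex.ofReal_mul]

lemma ofReal_one_div_sqrt_natCast_ne_zero {N : ℕ} (hN : N ≠ 0) :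
    ((1 / Real.sqrt N : ℝ) : ℂ) ≠ 0 := by
  have : 0 < Real.sqrt N := Real.sqrt_pos.mpr (by exact_mod_cast Nat.pos_of_ne_zero hN)
  exact_mod_cast (one_div_pos.mpr this).ne'

lemma rowVals_kronVec_iff {M N n : ℕ} [NeZero n] (v : Fin M → ℂ) (w : Fin N → ℂ) :
    RowVals (M * N) n (kronVec v w) ↔ Equidistributed n
      (((1 / Real.sqrt M : ℝ) : ℂ) * ((1 / Real.sqrt N : ℝ) : ℂ)) fun p : Fin M × Fin N =>
        v p.1 * w p.2 := by
  rw [rowVals_iff_equidistributed, ofReal_one_div_sqrt_natCast_mul]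
  exact equidistributed_comp_equiv (v := fun p : Fin M × Fin N => v p.1 * w p.2)
    finProdFinEquiv.symm

lemma RowVals.exists_eq_toCircle {N m n : ℕ} [NeZero m] [NeZero n] {v : Fin N → ℂ}
    (hv : RowVals N m v) (hN : N ≠ 0) (hmN : m ∣ N) (hmn : m ∣ n) (j : Fin N) :
    ∃ y : ZMod n, v j = ((1 / Real.sqrt N : ℝ) : ℂ) * toCircle y := by
  obtain ⟨x, hx⟩ := ((rowVals_iff_equidistributed (n := m) v).mp hv).exists_eq
    (ofReal_one_div_sqrt_natCast_ne_zero hN) (by rwa [Fintype.card_fin]) j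
  obtain ⟨y, hy⟩ := exists_toCircle_eq_of_dvd hmn x
  exact ⟨y, hx.trans (by rw [hy])⟩

lemma RowVals.kronVec_pow {a M N p q : ℕ} {v : Fin M → ℂ} {w : Fin N → ℂ}
    (hv : RowVals M (a ^ p) v) (hw : RowVals N (a ^ q) w) (hM : M ≠ 0) (hN : N ≠ 0)
    (hpM : a ^ p ∣ M) (hqN : a ^ q ∣ N) : RowVals (M * N) (a ^ max p q) (kronVec v w) := by
  have : NeZero (a ^ p) := ⟨ne_zero_of_dvd_ne_zero hM hpM⟩
  have : NeZero (a ^ q) := ⟨ne_zero_of_dvd_ne_zero hN hqN⟩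
  rcases le_total p q with hpq | hqp
  · rw [max_eq_right hpq, rowVals_kronVec_iff]
    exact ((rowVals_iff_equidistributed w).mp hw).mul_left
      (hv.exists_eq_toCircle hM hpM (pow_dvd_pow a hpq)) (ofReal_one_div_sqrt_natCast_ne_zero hM)
      (by rwa [Fintype.card_fin])
  · rw [max_eq_left hqp, rowVals_kronVec_iff]
    exact ((rowVals_iff_equidistributed v).mp hv).mul_right
      (hw.exists_eq_toCircle hN hqN (pow_dvd_pow a hqp)) (ofReal_one_div_sqrt_natCast_ne_zero hN)
      (by rwa [Fintype.card_fin])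

lemma mulLeft_comp_castHom_surjective {n d u : ℕ} [NeZero d] (hdn : d ∣ n) (hu : u.Coprime d) :
    Function.Surjective
      ((AddMonoidHom.mulLeft (u : ZMod d)).comp (castHom hdn (ZMod d)).toAddMonoidHom) := by
  intro z
  obtain ⟨x, hx⟩ := ringHom_surjective (castHom hdn (ZMod d))
    (((unitOfCoprime u hu)⁻¹ : (ZMod d)ˣ) * z)
  refine ⟨x, ?_⟩
  simp only [AddMonoidHom.comp_apply, RingHom.toAddMonoidHom_eq_coe, AddMonoidHom.coe_coe, hx,
    AddMonoidHom.coe_mulLeft, ← mul_assoc]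
  rw [← coe_unitOfCoprime u hu, Units.mul_inv, one_mul]

lemma rowVals_fourier (n : ℕ) [NeZero n] (r : Fin n) :
    RowVals n (addOrderOf ((r : ℕ) : ZMod n)) (Fourier n r) := by
  rw [ZMod.addOrderOf_coe _ (NeZero.ne n)]
  set g := n.gcd r
  set d := n / g
  have hg : 0 < g := Nat.gcd_pos_of_pos_left _ (NeZero.pos n)
  have hdg : d * g = n := Nat.div_mul_cancel (Nat.gcd_dvd_left n r)
  have : NeZero d := ⟨fun h => NeZero.ne n (by rw [← hdg, h, zero_mul])⟩
  set r' := (r : ℕ) / g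
  have hr : r' * g = r := Nat.div_mul_cancel (Nat.gcd_dvd_right n r)
  have hcop : r'.Coprime d := (Nat.coprime_div_gcd_div_gcd hg).symm
  -- writing `r = r' g` and `n = d g`, `e(r j / n) = e(r' j / d)` with `r'` a unit mod `d`
  let f : ZMod n →+ ZMod d := (AddMonoidHom.mulLeft (r' : ZMod d)).comp
    (castHom ⟨g, hdg.symm⟩ (ZMod d)).toAddMonoidHom
  have hrow : Fourier n r
      = (fun x => ((1 / Real.sqrt n : ℝ) : ℂ) * toCircle (f x)) ∘ finEquivZMod n := by
    funext j
    have key : (toCircle ((r * j : ℕ) : ZMod n) : ℂ) = toCircle (f (j : ℕ)) := by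
      rw [← hr, show ((r' * g * j : ℕ) : ZMod n) = ((r' * j : ℕ) : ZMod n) * (g : ZMod n) by
        push_cast; ring, toCircle_mul_natCast hdg, map_natCast]
      simp only [f, AddMonoidHom.comp_apply, RingHom.toAddMonoidHom_eq_coe, AddMonoidHom.coe_coe,
        map_natCast, AddMonoidHom.coe_mulLeft, Nat.cast_mul]
    simp only [Fourier, Matrix.of_apply, Function.comp_apply, finEquivZMod, Equiv.coe_fn_mk]
    rw [← key, toCircle_natCast]
    push_cast
    ring_nf
  rw [rowVals_iff_equidistributed, hrow, equidistributed_comp_equiv]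
  exact equidistributed_toCircle_comp f (mulLeft_comp_castHom_surjective _ hcop)
    (ofReal_one_div_sqrt_natCast_ne_zero (NeZero.ne n))

lemma card_filter_addOrderOf_eq_totient (n : ℕ) [NeZero n] {d : ℕ} (hd : d ∣ n) :
    #{r : Fin n | addOrderOf ((r : ℕ) : ZMod n) = d} = d.totient := by
  rw [← IsAddCyclic.card_addOrderOf_eq_totient (α := ZMod n) (by rwa [ZMod.card])]
  exact card_filter_comp_equiv (finEquivZMod n) (fun x => addOrderOf x = d)

lemma exists_addOrderOf_eq_pow {a K : ℕ} (ha : a.Prime) (x : ZMod (a ^ K)) :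
    ∃ e ≤ K, addOrderOf x = a ^ e := by
  have : NeZero a := ⟨ha.ne_zero⟩
  have h := addOrderOf_dvd_card (x := x)
  rw [ZMod.card] at h
  exact (Nat.dvd_prime_pow ha).mp h

lemma sum_range_totient_prime_pow {a : ℕ} (ha : a.Prime) (k : ℕ) :
    ∑ j ∈ range (k + 1), (a ^ j).totient = a ^ k := by
  rw [← Nat.sum_totient (a ^ k), Nat.divisors_prime_pow ha, sum_map]
  rfl

lemma List.prod_map_pow_eq_pow_sum (a : ℕ) (L : List ℕ) : (L.map (a ^ ·)).prod = a ^ L.sum := by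
  induction L with
  | nil => simp
  | cons k L ih => simp [pow_add, ih]

lemma List.foldr_max_le_sum (L : List ℕ) : L.foldr max 0 ≤ L.sum := by
  induction L with
  | nil => simp
  | cons k L ih => simp only [List.foldr_cons, List.sum_cons]; omega

lemma exists_rowVals_kronFourier {a : ℕ} (ha : a.Prime) (L : List ℕ)
    (i : Fin (L.map (a ^ ·)).prod) :
    ∃ t ≤ L.foldr max 0, RowVals _ (a ^ t) (kronFourier (L.map (a ^ ·)) i) := by
  have : NeZero a := ⟨ha.ne_zero⟩
  induction L with
  | nil =>
    refine ⟨0, le_rfl, ?_⟩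
    obtain rfl : i = (0 : Fin 1) := Subsingleton.elim (α := Fin 1) _ _
    change RowVals 1 (a ^ 0) ((1 : Matrix (Fin 1) (Fin 1) ℂ) 0)
    rw [pow_zero]
    intro t
    fin_cases t
    simp [Fin.fin_one_eq_zero, filter_singleton]
  | cons K L ih =>
    obtain ⟨e, he, hord⟩ :=
      exists_addOrderOf_eq_pow ha (((finProdFinEquiv.symm i).1 : ℕ) : ZMod (a ^ K))
    obtain ⟨t, ht, hrow⟩ := ih (finProdFinEquiv.symm i).2
    refine ⟨max e t, max_le_max he ht, ?_⟩
    have hprod := L.prod_map_pow_eq_pow_sum a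
    have hP : (L.map (a ^ ·)).prod ≠ 0 := by rw [hprod]; exact NeZero.ne _
    have htP : a ^ t ∣ (L.map (a ^ ·)).prod := by
      rw [hprod]; exact pow_dvd_pow a (ht.trans L.foldr_max_le_sum)
    exact (hord ▸ rowVals_fourier _ _).kronVec_pow hrow (NeZero.ne _) hP (pow_dvd_pow a he) htP

lemma card_filter_lt_eq_sum {α : Type*} [Fintype α] (f : α → ℕ) (k : ℕ) :
    #{x | f x < k} = ∑ j ∈ range k, #{x | f x = j} := by
  rw [card_eq_sum_card_fiberwise (f := f) (t := range k) fun x hx => by simpa using hx]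
  refine sum_congr rfl fun j hj => ?_
  rw [filter_filter]
  exact congrArg card (filter_congr fun x _ => by simp only [mem_range] at hj; omega)

lemma card_filter_max_eq {α β : Type*} [Fintype α] [Fintype β] (f : α → ℕ) (g : β → ℕ) (k : ℕ) :
    #{p : α × β | max (f p.1) (g p.2) = k}
      = #{a | f a = k} * #{b | g b ≤ k} + #{a | f a < k} * #{b | g b = k} := by
  classical
  rw [← card_product, ← card_product, ← card_union_of_disjoint]
  · congr 1
    ext ⟨a, b⟩
    simp only [mem_filter, mem_univ, true_and, mem_union, mem_product]
    omega
  · rw [disjoint_left]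
    rintro ⟨a, b⟩
    simp only [mem_product, mem_filter, mem_univ, true_and]
    omega

lemma countRows_eq_card_filter {N a k : ℕ} (ha : 1 < a) {A : Matrix (Fin N) (Fin N) ℂ}
    (τ : Fin N → ℕ) (hN : N ≠ 0) (hτ : ∀ i, RowVals N (a ^ τ i) (A i))
    (hτN : ∀ i, a ^ τ i ∣ N) (hk : a ^ k ∣ N) :
    countRows N (a ^ k) A = #{i | τ i = k} := by
  unfold countRows
  congr 1
  ext i
  simp only [mem_filter, mem_univ, true_and]
  exact ⟨fun h => Nat.pow_right_injective ha ((hτ i).eq_of_dvd h hN (hτN i) hk),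
    fun h => h ▸ hτ i⟩

lemma countRows_kron {a M N k : ℕ} (ha : 1 < a) {A : Matrix (Fin M) (Fin M) ℂ}
    {B : Matrix (Fin N) (Fin N) ℂ} (τA : Fin M → ℕ) (τB : Fin N → ℕ) (hM : M ≠ 0) (hN : N ≠ 0)
    (hA : ∀ r, RowVals M (a ^ τA r) (A r)) (hB : ∀ s, RowVals N (a ^ τB s) (B s))
    (hAM : ∀ r, a ^ τA r ∣ M) (hBN : ∀ s, a ^ τB s ∣ N) (hk : a ^ k ∣ M * N) :
    countRows (M * N) (a ^ k) (kron A B)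
      = #{r | τA r = k} * #{s | τB s ≤ k} + #{r | τA r < k} * #{s | τB s = k} := by
  let τ i := max (τA (finProdFinEquiv.symm i).1) (τB (finProdFinEquiv.symm i).2)
  have hτN : ∀ i, a ^ τ i ∣ M * N := fun i => by
    rcases max_choice (τA (finProdFinEquiv.symm i).1) (τB (finProdFinEquiv.symm i).2) with h | h
    · rw [show τ i = _ from h]; exact (hAM _).mul_right N
    · rw [show τ i = _ from h]; exact (hBN _).mul_left M
  rw [countRows_eq_card_filter (A := kron A B) ha τ (mul_ne_zero hM hN)
    (fun i => (hA _).kronVec_pow (hB _) hM hN (hAM _) (hBN _)) hτN hk, ← card_filter_max_eq]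
  exact card_filter_comp_equiv finProdFinEquiv.symm fun p => max (τA p.1) (τB p.2) = k

lemma countRows_kron_fourier {a K N k : ℕ} (ha : a.Prime) {B : Matrix (Fin N) (Fin N) ℂ}
    (τ : Fin N → ℕ) (hN : N ≠ 0) (hB : ∀ s, RowVals N (a ^ τ s) (B s))
    (hBN : ∀ s, a ^ τ s ∣ N) (hk : k ≤ K) :
    countRows (a ^ K * N) (a ^ k) (kron (Fourier (a ^ K)) B)
      = (a ^ k).totient * #{s | τ s ≤ k}
        + (∑ j ∈ range k, (a ^ j).totient) * #{s | τ s = k} := by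
  have : NeZero a := ⟨ha.ne_zero⟩
  choose τF hτFK hτF using fun r : Fin (a ^ K) =>
    exists_addOrderOf_eq_pow ha ((r : ℕ) : ZMod (a ^ K))
  have hcardF : ∀ j ≤ K, #{r | τF r = j} = (a ^ j).totient := fun j hj => by
    rw [← card_filter_addOrderOf_eq_totient (a ^ K) (pow_dvd_pow a hj)]
    congr 1
    ext r
    simp [hτF r, (Nat.pow_right_injective ha.two_le).eq_iff]
  rw [countRows_kron ha.one_lt τF τ (NeZero.ne _) hN (fun r => hτF r ▸ rowVals_fourier _ r) hB
    (fun r => pow_dvd_pow a (hτFK r)) hBN (dvd_mul_of_dvd_left (pow_dvd_pow a hk) N),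
    hcardF k hk, card_filter_lt_eq_sum,
    sum_congr rfl fun j hj => hcardF j ((mem_range.mp hj).le.trans hk)]

lemma exists_rowType_counts_kronFourier {a : ℕ} (ha : a.Prime) (ks : List ℕ) (K : ℕ) :
    ∃ τ : Fin (ks.map (a ^ ·)).prod → ℕ, (∀ s, τ s ≤ ks.foldr max 0) ∧
      (∀ t ≤ ks.sum, countRows _ (a ^ t) (kronFourier (ks.map (a ^ ·))) = #{s | τ s = t}) ∧
      ∀ k ≤ K, countRows (((K :: ks).map (a ^ ·)).prod) (a ^ k)
        (kronFourier ((K :: ks).map (a ^ ·))) = (a ^ k).totient * #{s | τ s ≤ k}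
          + (∑ j ∈ range k, (a ^ j).totient) * #{s | τ s = k} := by
  have hP := ks.prod_map_pow_eq_pow_sum a
  have hP0 : (ks.map (a ^ ·)).prod ≠ 0 := hP ▸ pow_ne_zero _ ha.ne_zero
  have hdvd : ∀ t ≤ ks.sum, a ^ t ∣ (ks.map (a ^ ·)).prod := fun t ht => hP ▸ pow_dvd_pow a ht
  choose τ hτmax hτ using exists_rowVals_kronFourier ha ks
  have hτP : ∀ s, a ^ τ s ∣ (ks.map (a ^ ·)).prod :=
    fun s => hdvd _ ((hτmax s).trans ks.foldr_max_le_sum)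
  exact ⟨τ, hτmax, fun t ht => countRows_eq_card_filter ha.one_lt τ hP0 hτ hτP (hdvd t ht),
    fun k hk => countRows_kron_fourier ha τ hP0 hτ hτP hk⟩

theorem stmt11_general (a : ℕ) (ha : a.Prime) (ks : List ℕ)
    (K : ℕ) (hK : ks.foldr max 0 ≤ K) :
    (countRows (((K :: ks).map (a ^ ·)).prod) (a ^ 0) (kronFourier ((K :: ks).map (a ^ ·)))
        = countRows ((ks.map (a ^ ·)).prod) (a ^ 0) (kronFourier (ks.map (a ^ ·)))) ∧
    (∀ k, 1 ≤ k → k ≤ ks.foldr max 0 →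
      countRows (((K :: ks).map (a ^ ·)).prod) (a ^ k) (kronFourier ((K :: ks).map (a ^ ·)))
        = a ^ (k - 1) * (a - 1) *
            (∑ t ∈ Finset.range k,
              countRows ((ks.map (a ^ ·)).prod) (a ^ t) (kronFourier (ks.map (a ^ ·))))
          + a ^ k *
              countRows ((ks.map (a ^ ·)).prod) (a ^ k) (kronFourier (ks.map (a ^ ·)))) ∧
    (∀ l, ks.foldr max 0 < l → l ≤ K →
      countRows (((K :: ks).map (a ^ ·)).prod) (a ^ l) (kronFourier ((K :: ks).map (a ^ ·)))
        = a ^ (l - 1) * (a - 1) * a ^ ks.sum) := by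
  have hmax := ks.foldr_max_le_sum
  obtain ⟨τ, hτmax, hB, hF⟩ := exists_rowType_counts_kronFourier ha ks K
  refine ⟨?_, fun k hk1 hkT => ?_, fun l hTl hlK => ?_⟩
  · rw [hF 0 K.zero_le, hB 0 (Nat.zero_le _)]
    simp
  · have hsum := sum_range_totient_prime_pow ha k
    have hle : #{s | τ s ≤ k} = ∑ t ∈ range k, #{s | τ s = t} + #{s | τ s = k} := by
      rw [← sum_range_succ, ← card_filter_lt_eq_sum]
      simp only [Nat.lt_succ_iff]
    rw [hF k (hkT.trans hK), hB k (hkT.trans hmax),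
      sum_congr rfl fun t ht => hB t ((mem_range.mp ht).le.trans (hkT.trans hmax)),
      ← Nat.totient_prime_pow ha hk1, hle]
    rw [sum_range_succ] at hsum
    -- so that rewriting `a ^ k` below leaves `φ (a ^ k)` untouched
    generalize (a ^ k).totient = φk at hsum ⊢
    rw [← hsum]
    ring
  · have hnone : #{s | τ s = l} = 0 :=
      card_eq_zero.mpr (filter_eq_empty_iff.mpr fun s _ => ((hτmax s).trans_lt hTl).ne)
    have hall : #{s | τ s ≤ l} = a ^ ks.sum := by
      rw [filter_true_of_mem fun s _ => (hτmax s).trans hTl.le, card_univ, Fintype.card_fin,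
        List.prod_map_pow_eq_pow_sum]
    rw [hF l hlK, hnone, hall, Nat.totient_prime_pow ha (by omega)]
    ring

/-- row-type counts of `F' = F_{a^{k_{m+1}}} ⊗ F` in terms of those of
the pure ordered FFKP `F`. -/
theorem stmt11 (a : ℕ) (ha : a.Prime) (ks : List ℕ) (hne : ks ≠ [])
    (hk : ∀ k ∈ ks, 1 ≤ k) (hsort : ks.Pairwise (· ≥ ·))
    (K : ℕ) (hK : ks.foldr max 0 ≤ K) :
    (countRows (((K :: ks).map (a ^ ·)).prod) (a ^ 0) (kronFourier ((K :: ks).map (a ^ ·)))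
        = countRows ((ks.map (a ^ ·)).prod) (a ^ 0) (kronFourier (ks.map (a ^ ·)))) ∧
    (∀ k, 1 ≤ k → k ≤ ks.foldr max 0 →
      countRows (((K :: ks).map (a ^ ·)).prod) (a ^ k) (kronFourier ((K :: ks).map (a ^ ·)))
        = a ^ (k - 1) * (a - 1) *
            (∑ t ∈ Finset.range k,
              countRows ((ks.map (a ^ ·)).prod) (a ^ t) (kronFourier (ks.map (a ^ ·))))
          + a ^ k *
              countRows ((ks.map (a ^ ·)).prod) (a ^ k) (kronFourier (ks.map (a ^ ·)))) ∧
    (∀ l, ks.foldr max 0 < l → l ≤ K →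
      countRows (((K :: ks).map (a ^ ·)).prod) (a ^ l) (kronFourier ((K :: ks).map (a ^ ·)))
        = a ^ (l - 1) * (a - 1) * a ^ ks.sum) :=
  stmt11_general a ha ks K hK
end

section
/- Two Kronecker products of unitary Fourier matrices F' and F'' of the same size are permutation equivalent (F'' = P_r F' P_c for permutation matrices) if and only if they are permutation-phasing equivalent (F'' = P_r D_r F' D_c P_c for permutation matrices P_r, P_c and unitary diagonal matrices D_r, D_c). -/
open Matrix

/-!
Up to the factor `c = 1/√N`, a Kronecker product `F` of Fourier matrices is the table of a
bicharacter of the finite abelian group `∏ ℤ/nᵢ`, hence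
`F (x - p) (y - q) · F x q · F p y = F x y · F p q · c`.
Every such product has its first row and column identically `c`, so if `P Dr F Dc Q` is one,
then `Dr F Dc` has some row `p` and some column `q` identically `c`. Multiplying the identity
by `r x s q · r p s y` then shows that `Dr F Dc` is `F` with its rows translated by `p` and its
columns by `q`: the phases only permute.
-/

open Equiv
open scoped Kronecker

section ShiftCovariant

variable {ι κ : Type*}

/-- For `A = c • χ` with `χ` a bicharacter of a finite abelian group `ι`, the translations
`α = (· - p)`, `β = (· - q)` work: `χ (x - p) (y - q) χ x q χ p y = χ x y χ p q`. -/
def ShiftCovariant (A : Matrix ι ι ℂ) (c : ℂ) : Prop :=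
  ∀ p q : ι, ∃ α β : Perm ι, ∀ x y, A (α x) (β y) * A x q * A p y = A x y * A p q * c

theorem shiftCovariant_addChar_mul {R : Type*} [CommRing R] (ψ : AddChar R ℂ) (c : ℂ) :
    ShiftCovariant (Matrix.of fun a b : R => c * ψ (a * b)) c := by
  intro p q
  refine ⟨Equiv.subRight p, Equiv.subRight q, fun x y => ?_⟩
  have key : ψ ((x - p) * (y - q)) * ψ (x * q) * ψ (p * y) = ψ (x * y) * ψ (p * q) := by
    simp only [← AddChar.map_add_eq_mul]
    ring_nf
  simp only [Matrix.of_apply, Equiv.subRight_apply]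
  linear_combination c ^ 3 * key

theorem ShiftCovariant.submatrix {A : Matrix ι ι ℂ} {c : ℂ} (hA : ShiftCovariant A c)
    (e : κ ≃ ι) : ShiftCovariant (A.submatrix e e) c := by
  intro p q
  obtain ⟨α, β, h⟩ := hA (e p) (e q)
  refine ⟨e.trans (α.trans e.symm), e.trans (β.trans e.symm), fun x y => ?_⟩
  simpa using h (e x) (e y)

theorem ShiftCovariant.kronecker {A : Matrix ι ι ℂ} {B : Matrix κ κ ℂ} {c d : ℂ}
    (hA : ShiftCovariant A c) (hB : ShiftCovariant B d) :
    ShiftCovariant (A ⊗ₖ B) (c * d) := by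
  rintro ⟨p₁, p₂⟩ ⟨q₁, q₂⟩
  obtain ⟨α₁, β₁, h₁⟩ := hA p₁ q₁
  obtain ⟨α₂, β₂, h₂⟩ := hB p₂ q₂
  refine ⟨α₁.prodCongr α₂, β₁.prodCongr β₂, fun ⟨x₁, x₂⟩ ⟨y₁, y₂⟩ => ?_⟩
  simp only [Matrix.kronecker_apply, Equiv.prodCongr_apply, Prod.map]
  linear_combination (B (α₂ x₂) (β₂ y₂) * B x₂ q₂ * B p₂ y₂) * h₁ x₁ y₁ +
    (A x₁ y₁ * A p₁ q₁ * c) * h₂ x₂ y₂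

theorem ShiftCovariant.diagonal_mul_mul_diagonal_eq_submatrix [Fintype ι] [DecidableEq ι]
    {A : Matrix ι ι ℂ} {c : ℂ} (hA : ShiftCovariant A c) (hc : c ≠ 0) {r s : ι → ℂ}
    {x₀ y₀ : ι} (hrow : ∀ y, (Matrix.diagonal r * A * Matrix.diagonal s) x₀ y = c)
    (hcol : ∀ x, (Matrix.diagonal r * A * Matrix.diagonal s) x y₀ = c) :
    ∃ α β : Perm ι, Matrix.diagonal r * A * Matrix.diagonal s = A.submatrix α β := by
  simp only [Matrix.mul_diagonal, Matrix.diagonal_mul] at hrow hcol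
  obtain ⟨α, β, h⟩ := hA x₀ y₀
  refine ⟨α, β, Matrix.ext fun x y => mul_left_cancel₀ (pow_ne_zero 2 hc) ?_⟩
  simp only [Matrix.mul_diagonal, Matrix.diagonal_mul, Matrix.submatrix_apply]
  calc c ^ 2 * (r x * A x y * s y)
      = r x * s y₀ * r x₀ * s y * (A x y * A x₀ y₀ * c) := by rw [← hrow y₀]; ring
    _ = r x * s y₀ * r x₀ * s y * (A (α x) (β y) * A x y₀ * A x₀ y) := by rw [h]
    _ = (r x * A x y₀ * s y₀) * (r x₀ * A x₀ y * s y) * A (α x) (β y) := by ring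
    _ = c ^ 2 * A (α x) (β y) := by rw [hcol, hrow]; ring

end ShiftCovariant

noncomputable def fourierScale (n : ℕ) : ℂ := ((1 / Real.sqrt n : ℝ) : ℂ)

theorem fourierScale_mul (m n : ℕ) : fourierScale (m * n) = fourierScale m * fourierScale n := by
  simp only [fourierScale, Nat.cast_mul, Real.sqrt_mul (Nat.cast_nonneg m), one_div, mul_inv,
    Complex.ofReal_mul]

theorem fourierScale_ne_zero {n : ℕ} (hn : n ≠ 0) : fourierScale n ≠ 0 := by
  simpa [fourierScale] using hn

theorem ZMod.finEquiv_apply_eq_natCast (n : ℕ) [NeZero n] (i : Fin n) :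
    ZMod.finEquiv n i = ((i : ℕ) : ZMod n) := by
  obtain ⟨n, rfl⟩ := Nat.exists_eq_succ_of_ne_zero (NeZero.ne n)
  exact (Fin.cast_val_eq_self i).symm

theorem Fourier_eq_submatrix_stdAddChar (n : ℕ) [NeZero n] :
    Fourier n = (Matrix.of fun a b : ZMod n => fourierScale n * ZMod.stdAddChar (a * b)).submatrix
      (ZMod.finEquiv n) (ZMod.finEquiv n) := by
  ext i j
  simp only [Matrix.submatrix_apply, Matrix.of_apply, ZMod.finEquiv_apply_eq_natCast,
    ← Nat.cast_mul, ZMod.stdAddChar_apply, ZMod.toCircle_natCast, Fourier, fourierScale]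
  push_cast
  ring_nf

theorem shiftCovariant_Fourier (n : ℕ) : ShiftCovariant (Fourier n) (fourierScale n) := by
  rcases eq_zero_or_neZero n with rfl | _
  · exact fun p => p.elim0
  · rw [Fourier_eq_submatrix_stdAddChar]
    exact (shiftCovariant_addChar_mul _ _).submatrix _

theorem shiftCovariant_kronFourier :
    ∀ L : List ℕ, ShiftCovariant (kronFourier L) (fourierScale L.prod)
  | [] => by
    have : Subsingleton (Fin ([] : List ℕ).prod) := Fin.subsingleton_one
    have hone (a b : Fin ([] : List ℕ).prod) : kronFourier [] a b = 1 := by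
      rw [Subsingleton.elim a b]
      exact Matrix.one_apply_eq b
    exact fun _ _ => ⟨1, 1, fun _ _ => by simp only [hone]; simp [fourierScale]⟩
  | n :: t => by
    show ShiftCovariant ((Fourier n ⊗ₖ kronFourier t).submatrix _ _) (fourierScale (n * t.prod))
    rw [fourierScale_mul]
    exact ((shiftCovariant_Fourier n).kronecker (shiftCovariant_kronFourier t)).submatrix _

theorem Fourier_apply_of_val_eq_zero {n : ℕ} (i j : Fin n) (h : (i : ℕ) = 0 ∨ (j : ℕ) = 0) :
    Fourier n i j = fourierScale n := by
  rcases h with h | h <;> simp [Fourier, fourierScale, h]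

theorem kron_apply_of_val_eq_zero {m n : ℕ} {A : Matrix (Fin m) (Fin m) ℂ}
    {B : Matrix (Fin n) (Fin n) ℂ} {c d : ℂ}
    (hA : ∀ i j : Fin m, (i : ℕ) = 0 ∨ (j : ℕ) = 0 → A i j = c)
    (hB : ∀ i j : Fin n, (i : ℕ) = 0 ∨ (j : ℕ) = 0 → B i j = d)
    (i j : Fin (m * n)) (h : (i : ℕ) = 0 ∨ (j : ℕ) = 0) : kron A B i j = c * d := by
  simp only [kron, Matrix.of_apply, finProdFinEquiv_symm_apply]
  rw [hA, hB] <;> rcases h with h | h <;> simp [h]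

theorem kronFourier_apply_of_val_eq_zero :
    ∀ (L : List ℕ) (i j : Fin L.prod), (i : ℕ) = 0 ∨ (j : ℕ) = 0 →
      kronFourier L i j = fourierScale L.prod
  | [], i, j, _ => by
    have : Subsingleton (Fin ([] : List ℕ).prod) := Fin.subsingleton_one
    rw [Subsingleton.elim i j, show fourierScale ([] : List ℕ).prod = 1 by simp [fourierScale]]
    exact Matrix.one_apply_eq j
  | n :: t, i, j, h => by
    show kron (Fourier n) (kronFourier t) i j = fourierScale (n * t.prod)
    rw [fourierScale_mul]
    exact kron_apply_of_val_eq_zero Fourier_apply_of_val_eq_zero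
      (kronFourier_apply_of_val_eq_zero t) i j h

theorem isPermMatrix_iff {α : Type*} [DecidableEq α] (P : Matrix α α ℂ) :
    IsPermMatrix P ↔ ∃ σ : Perm α, P = σ.permMatrix ℂ := by
  have hentry (σ : Perm α) (i j : α) : σ⁻¹.permMatrix ℂ i j = if σ j = i then 1 else 0 := by
    simp [PEquiv.toMatrix_apply, Equiv.eq_symm_apply, eq_comm]
  constructor
  · rintro ⟨σ, hσ⟩
    exact ⟨σ⁻¹, Matrix.ext fun i j => by rw [hσ, hentry]⟩
  · rintro ⟨σ, rfl⟩
    exact ⟨σ⁻¹, fun i j => by rw [← hentry, inv_inv]⟩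

theorem exists_isPermMatrix_mul_mul_eq_iff {α : Type*} [Fintype α] [DecidableEq α]
    (A M : Matrix α α ℂ) :
    (∃ P Q, IsPermMatrix P ∧ IsPermMatrix Q ∧ M = P * A * Q) ↔
      ∃ σ τ : Perm α, M = A.submatrix σ τ := by
  simp only [isPermMatrix_iff]
  constructor
  · rintro ⟨_, _, ⟨σ, rfl⟩, ⟨τ, rfl⟩, rfl⟩
    refine ⟨σ, τ.symm, ?_⟩
    rw [PEquiv.toMatrix_toPEquiv_mul, PEquiv.mul_toMatrix_toPEquiv, Matrix.submatrix_submatrix]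
    rfl
  · rintro ⟨σ, τ, rfl⟩
    refine ⟨_, _, ⟨σ, rfl⟩, ⟨τ.symm, rfl⟩, ?_⟩
    rw [PEquiv.toMatrix_toPEquiv_mul, PEquiv.mul_toMatrix_toPEquiv, Matrix.submatrix_submatrix]
    rfl

theorem isUnitaryDiag_one {α : Type*} [DecidableEq α] : IsUnitaryDiag (1 : Matrix α α ℂ) :=
  ⟨1, fun _ => norm_one, Matrix.diagonal_one.symm⟩

theorem stmt19_general (Ls Ms : List ℕ) (hsize : Ls.prod = Ms.prod) :
    (∃ P Q : Matrix (Fin Ls.prod) (Fin Ls.prod) ℂ,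
      IsPermMatrix P ∧ IsPermMatrix Q ∧
      Matrix.reindex (finCongr hsize.symm) (finCongr hsize.symm) (kronFourier Ms)
        = P * kronFourier Ls * Q) ↔
    (∃ P Q Dr Dc : Matrix (Fin Ls.prod) (Fin Ls.prod) ℂ,
      IsPermMatrix P ∧ IsPermMatrix Q ∧ IsUnitaryDiag Dr ∧ IsUnitaryDiag Dc ∧
      Matrix.reindex (finCongr hsize.symm) (finCongr hsize.symm) (kronFourier Ms)
        = P * Dr * kronFourier Ls * Dc * Q) := by
  constructor
  · rintro ⟨P, Q, hP, hQ, h⟩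
    exact ⟨P, Q, 1, 1, hP, hQ, isUnitaryDiag_one, isUnitaryDiag_one, by simpa using h⟩
  · rintro ⟨P, Q, _, _, hP, hQ, ⟨r, -, rfl⟩, ⟨s, -, rfl⟩, h⟩
    rcases isEmpty_or_nonempty (Fin Ls.prod) with _ | ⟨⟨k⟩⟩
    · exact ⟨P, Q, hP, hQ, Subsingleton.elim _ _⟩
    set M := Matrix.reindex (finCongr hsize.symm) (finCongr hsize.symm) (kronFourier Ms)
    have hM₀ (i j : Fin Ls.prod) (hij : (i : ℕ) = 0 ∨ (j : ℕ) = 0) :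
        M i j = fourierScale Ls.prod := by
      simp only [M, Matrix.reindex_apply, Matrix.submatrix_apply, hsize]
      exact kronFourier_apply_of_val_eq_zero Ms _ _ (by simpa using hij)
    obtain ⟨σ, τ, hστ⟩ := (exists_isPermMatrix_mul_mul_eq_iff
      (Matrix.diagonal r * kronFourier Ls * Matrix.diagonal s) M).1
        ⟨P, Q, hP, hQ, by rw [h]; simp only [Matrix.mul_assoc]⟩
    let z : Fin Ls.prod := ⟨0, k.pos⟩
    obtain ⟨α, β, hαβ⟩ := (shiftCovariant_kronFourier Ls).diagonal_mul_mul_diagonal_eq_submatrix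
      (fourierScale_ne_zero k.pos.ne') (x₀ := σ z) (y₀ := τ z)
      (fun y => by simpa [hστ] using hM₀ z (τ.symm y) (.inl rfl))
      (fun x => by simpa [hστ] using hM₀ (σ.symm x) z (.inr rfl))
    exact (exists_isPermMatrix_mul_mul_eq_iff _ _).2 ⟨σ.trans α, τ.trans β, by rw [hστ, hαβ]; rfl⟩

/-- two Kronecker products of Fourier matrices of the same size are
permutation equivalent iff they are permutation-phasing equivalent. -/
theorem stmt19 (Ls Ms : List ℕ) (hL : ∀ n ∈ Ls, 0 < n) (hM : ∀ n ∈ Ms, 0 < n)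
    (hsize : Ls.prod = Ms.prod) :
    (∃ P Q : Matrix (Fin Ls.prod) (Fin Ls.prod) ℂ,
      IsPermMatrix P ∧ IsPermMatrix Q ∧
      Matrix.reindex (finCongr hsize.symm) (finCongr hsize.symm) (kronFourier Ms)
        = P * kronFourier Ls * Q) ↔
    (∃ P Q Dr Dc : Matrix (Fin Ls.prod) (Fin Ls.prod) ℂ,
      IsPermMatrix P ∧ IsPermMatrix Q ∧ IsUnitaryDiag Dr ∧ IsUnitaryDiag Dc ∧
      Matrix.reindex (finCongr hsize.symm) (finCongr hsize.symm) (kronFourier Ms)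
        = P * Dr * kronFourier Ls * Dc * Q) :=
  stmt19_general Ls Ms hsize
end
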